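/- The abelianization of the group H presented on generators a,b,c,d,e,f with relators abcdef, ab⁻¹c²f⁻¹e²d⁻¹, a²fc²bed, ad⁻²cb⁻²ef⁻¹, ad²cf²eb², af⁻²cd⁻¹eb⁻² is the trivial group. -/

import Mathlib

/-!
In the abelianization every relator becomes the linear relation given by its vector of exponent
sums. The six exponent-sum vectors of the relators of `H` form an integer matrix with an integer
inverse, so they span `ℤ⁶`; hence the images of all generators, and with them the whole
abelianization, are trivial.
-/

namespace Stmt0

/-- The generators `a, b, c, d, e, f` of the free group on six letters. -/
def a : FreeGroup (Fin 6) := FreeGroup.of 0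
def b : FreeGroup (Fin 6) := FreeGroup.of 1
def c : FreeGroup (Fin 6) := FreeGroup.of 2
def d : FreeGroup (Fin 6) := FreeGroup.of 3
def e : FreeGroup (Fin 6) := FreeGroup.of 4
def f : FreeGroup (Fin 6) := FreeGroup.of 5

/-- The six relators of Leary's group `H`. -/
def rels : Set (FreeGroup (Fin 6)) :=
  { a * b * c * d * e * f,
    a * b⁻¹ * c ^ 2 * f⁻¹ * e ^ 2 * d⁻¹,
    a ^ 2 * f * c ^ 2 * b * e * d,
    a * d⁻¹ ^ 2 * c * b⁻¹ ^ 2 * e * f⁻¹,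
    a * d ^ 2 * c * f ^ 2 * e * b ^ 2,
    a * f⁻¹ ^ 2 * c * d⁻¹ * e * b⁻¹ ^ 2 }

/-- The group `H = ⟨a,…,f ∣ the six relators⟩`. -/
abbrev H := PresentedGroup rels

end Stmt0

namespace FreeGroup
variable {α : Type*} [DecidableEq α]

def exponentSum : FreeGroup α →* Multiplicative (α → ℤ) :=
  lift fun i => .ofAdd (Pi.single i 1)

theorem map_eq_prod_zpow_exponentSum [Fintype α] {G : Type*} [CommGroup G]
    (φ : FreeGroup α →* G) (w : FreeGroup α) :
    φ w = ∏ i, φ (of i) ^ (exponentSum w).toAdd i := by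
  induction w using FreeGroup.induction_on with
  | C1 => simp
  | of i => simp [exponentSum, Pi.single_apply]
  | inv_of i _ => simp [exponentSum, Pi.single_apply]
  | mul x y hx hy => simp [hx, hy, zpow_add, Finset.prod_mul_distrib]

end FreeGroup

theorem Matrix.eq_zero_of_forall_sum_zsmul_eq_zero {ι κ G : Type*} [Fintype ι] [Fintype κ]
    [DecidableEq ι] [AddCommGroup G] {M : Matrix κ ι ℤ} {N : Matrix ι κ ℤ} (hNM : N * M = 1)
    {y : ι → G} (hy : ∀ k, ∑ i, M k i • y i = 0) (i : ι) : y i = 0 :=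
  calc y i = ∑ j, (N * M) i j • y j := by simp [hNM, Matrix.one_apply]
    _ = ∑ k, N i k • ∑ j, M k j • y j := by
      simp only [Matrix.mul_apply, Finset.sum_smul, Finset.smul_sum, mul_smul]
      exact Finset.sum_comm
    _ = 0 := by simp [hy]

namespace PresentedGroup
variable {α : Type*} {rels : Set (FreeGroup α)}

theorem abelianization_eq_one_of_forall_of_eq_one
    (h : ∀ i, Abelianization.of (of (rels := rels) i) = 1)
    (x : Abelianization (PresentedGroup rels)) : x = 1 :=
  DFunLike.congr_fun (Abelianization.hom_ext (MonoidHom.id _) 1 (PresentedGroup.ext h)) x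

theorem abelianization_eq_one_of_exponentSum {κ : Type*} [Fintype α] [DecidableEq α] [Fintype κ]
    (M : Matrix κ α ℤ) (N : Matrix α κ ℤ) (hNM : N * M = 1)
    (hM : ∀ k, ∃ r ∈ rels, (FreeGroup.exponentSum r).toAdd = M k)
    (x : Abelianization (PresentedGroup rels)) : x = 1 := by
  refine abelianization_eq_one_of_forall_of_eq_one (fun i => ?_) x
  refine Additive.ofMul.injective <| Matrix.eq_zero_of_forall_sum_zsmul_eq_zero hNM
    (y := fun i => Additive.ofMul (Abelianization.of (of (rels := rels) i))) (fun k => ?_) i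
  obtain ⟨r, hr, hrM⟩ := hM k
  rw [← hrM]
  have hr_prod := FreeGroup.map_eq_prod_zpow_exponentSum (Abelianization.of.comp (mk rels)) r
  simp only [MonoidHom.comp_apply, one_of_mem hr, map_one] at hr_prod
  exact congrArg Additive.ofMul hr_prod.symm

end PresentedGroup

namespace Stmt0

def exponentMatrix : Matrix (Fin 6) (Fin 6) ℤ :=
  !![1, 1, 1, 1, 1, 1;
     1, -1, 2, -1, 2, -1;
     2, 1, 2, 1, 1, 1;
     1, -2, 1, -2, 1, -1;
     1, 2, 1, 2, 1, 2;
     1, -2, 1, -1, 1, -2]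

def exponentMatrixInv : Matrix (Fin 6) (Fin 6) ℤ :=
  !![5, -1, 0, 0, -3, 0;
     7, 0, 0, -1, -5, -1;
     -6, 1, 1, 0, 3, 0;
     -4, 0, 0, 0, 3, 1;
     3, 0, -1, 0, -1, 0;
     -4, 0, 0, 1, 3, 0]

theorem exponentMatrixInv_mul : exponentMatrixInv * exponentMatrix = 1 := by
  decide

theorem exists_mem_rels_exponentSum_eq (k : Fin 6) :
    ∃ r ∈ rels, (FreeGroup.exponentSum r).toAdd = exponentMatrix k := by
  simp only [rels, Set.mem_insert_iff, Set.mem_singleton_iff, exists_eq_or_imp, exists_eq_left]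
  fin_cases k <;> decide

/-- The abelianization of `H` is trivial. -/
theorem abelianization_H_trivial : ∀ x : Abelianization H, x = 1 :=
  PresentedGroup.abelianization_eq_one_of_exponentSum exponentMatrix exponentMatrixInv
    exponentMatrixInv_mul exists_mem_rels_exponentSum_eq

end Stmt0
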